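/- Let n ≥ 1 and let 0 ≤ m'_1 < m'_2 < … < m'_n be integers. Let x_1, …, x_{m'_n} be positive reals and for each r let x^{(m'_r)} = (x_1, …, x_{m'_r}). Then the n × n matrix E whose (r,c) entry is e_{c−1}(x^{(m'_r)}) (the (c−1)-th elementary symmetric polynomial, with e_0 := 1 and e_v of the empty list := 0 for v > 0) has strictly positive determinant. -/

import Mathlib

open Finset

set_option maxHeartbeats 1000000

/-- `esym x k v` = v-th elementary symmetric polynomial in `x 0, …, x (k-1)`. -/
noncomputable def esym (x : ℕ → ℝ) (k v : ℕ) : ℝ :=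
  ∑ s ∈ (Finset.range k).powersetCard v, ∏ i ∈ s, x i

lemma esym_zero (x : ℕ → ℝ) (k : ℕ) : esym x k 0 = 1 := by
  simp [esym]

lemma esym_succ (x : ℕ → ℝ) (k v : ℕ) :
    esym x (k + 1) (v + 1) = esym x k (v + 1) + x k * esym x k v := by
  unfold esym
  rw [Finset.range_add_one, Finset.powersetCard_succ_insert (by simp)]
  rw [Finset.sum_union]
  · congr 1
    rw [Finset.sum_image, Finset.mul_sum]
    · refine Finset.sum_congr rfl fun s hs => ?_
      have hk : k ∉ s := fun h => by
        have := Finset.mem_powersetCard.mp hs |>.1 h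
        simp at this
      rw [Finset.prod_insert hk]
    · intro s hs t ht hst
      have hks : k ∉ s := fun h => by
        have := Finset.mem_powersetCard.mp hs |>.1 h; simp at this
      have hkt : k ∉ t := fun h => by
        have := Finset.mem_powersetCard.mp ht |>.1 h; simp at this
      have : (insert k s).erase k = (insert k t).erase k := by rw [hst]
      rwa [Finset.erase_insert hks, Finset.erase_insert hkt] at this
  · rw [Finset.disjoint_left]
    intro s hs hs'
    have hks : k ∉ s := fun h => by
      have := Finset.mem_powersetCard.mp hs |>.1 h; simp at this
    obtain ⟨t, ht, rfl⟩ := Finset.mem_image.mp hs'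
    exact hks (Finset.mem_insert_self _ _)

/-- Auxiliary "shifted row": `dRow x k v = esym x k (v-1)` with `dRow x k 0 = 0`. -/
noncomputable def dRow (x : ℕ → ℝ) (k : ℕ) : ℕ → ℝ
  | 0 => 0
  | (v + 1) => esym x k v

lemma esym_succ_sub (x : ℕ → ℝ) (k c : ℕ) :
    esym x (k + 1) c - esym x k c = x k * dRow x k c := by
  cases c with
  | zero => simp [esym_zero, dRow]
  | succ v => rw [esym_succ]; simp only [dRow]; ring

lemma esym_sub (x : ℕ → ℝ) {a b : ℕ} (c : ℕ) (h : a ≤ b) :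
    esym x b c - esym x a c = ∑ k ∈ Finset.Ico a b, x k * dRow x k c := by
  rw [Finset.sum_Ico_eq_sum_range]
  have h1 : ∀ i, x (a + i) * dRow x (a + i) c
      = esym x (a + (i + 1)) c - esym x (a + i) c := fun i => by
    rw [← Nat.add_assoc]; exact (esym_succ_sub x _ c).symm
  rw [Finset.sum_congr rfl fun i _ => h1 i,
    Finset.sum_range_sub (fun i => esym x (a + i) c), Nat.add_sub_cancel' h, Nat.add_zero]

lemma key (x : ℕ → ℝ) (hx : ∀ i, 0 < x i) :
    ∀ n (m : Fin n → ℕ), StrictMono m →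
      0 < Matrix.det (fun r c : Fin n => esym x (m r) (c : ℕ)) := by
  intro n
  induction n with
  | zero =>
      intro m _
      show 0 < Matrix.det (Matrix.of fun r c : Fin 0 => esym x (m r) (c : ℕ))
      rw [Matrix.det_isEmpty]
      norm_num
  | succ n ih =>
      intro m hm
      -- extend `m` to a function on ℕ
      set mm : ℕ → ℕ := fun j => m ⟨min j n, by omega⟩ with hmm
      have hmmr : ∀ r : Fin (n + 1), mm (r : ℕ) = m r := by
        intro r
        simp only [hmm]
        congr 1
        exact Fin.ext (by simp [Nat.lt_succ_iff.mp r.isLt])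
      have hmmmono : Monotone mm := by
        intro a b hab
        exact hm.monotone (by simp only [Fin.mk_le_mk]; omega)
      have hmmlt : ∀ j, j < n → mm j < mm (j + 1) := by
        intro j hj
        exact hm (by simp only [Fin.mk_lt_mk]; omega)
      -- the row-difference matrix
      set T : ℕ → ℕ → ℝ := fun j c =>
        if j = 0 then esym x (mm 0) c else esym x (mm j) c - esym x (mm (j - 1)) c with hT
      set N : Matrix (Fin (n + 1)) (Fin (n + 1)) ℝ := fun r c => T (r : ℕ) (c : ℕ) with hN
      set L : Matrix (Fin (n + 1)) (Fin (n + 1)) ℝ :=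
        fun r s => if (s : ℕ) ≤ (r : ℕ) then 1 else 0 with hL
      have htel : ∀ (t : ℕ) (c : ℕ), ∑ j ∈ Finset.range (t + 1), T j c = esym x (mm t) c := by
        intro t c
        rw [Finset.sum_range_succ']
        have h0 : T 0 c = esym x (mm 0) c := by simp [hT]
        have hs : ∀ i, T (i + 1) c = esym x (mm (i + 1)) c - esym x (mm i) c := by
          intro i; simp [hT]
        rw [h0]
        rw [Finset.sum_congr rfl fun i _ => hs i]
        rw [Finset.sum_range_sub (fun i => esym x (mm i) c)]
        ring
      have hE : (fun r c : Fin (n + 1) => esym x (m r) (c : ℕ)) = L * N := by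
        ext r c
        rw [Matrix.mul_apply]
        have step1 : ∀ s : Fin (n + 1), L r s * N s c
            = (fun j => if j ≤ (r : ℕ) then T j (c : ℕ) else 0) (s : ℕ) := by
          intro s
          simp only [hL, hN]
          by_cases hle : (s : ℕ) ≤ (r : ℕ) <;> simp [hle]
        rw [Finset.sum_congr rfl fun s _ => step1 s]
        rw [Fin.sum_univ_eq_sum_range (fun j => if j ≤ (r : ℕ) then T j (c : ℕ) else 0) (n + 1)]
        have hsub : ∑ j ∈ Finset.range (n + 1), (if j ≤ (r : ℕ) then T j (c : ℕ) else 0)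
            = ∑ j ∈ Finset.range ((r : ℕ) + 1), T j (c : ℕ) := by
          rw [← Finset.sum_filter]
          congr 1
          ext j
          simp only [Finset.mem_filter, Finset.mem_range]
          have := r.isLt
          omega
        rw [hsub, htel, hmmr]
      have hLdet : Matrix.det L = 1 := by
        have htri : L.BlockTriangular OrderDual.toDual := by
          intro i j hij
          have hij' : i < j := hij
          have hn' : ¬ ((j : ℕ) ≤ (i : ℕ)) := Nat.not_le.mpr hij'
          simp only [hL]
          exact if_neg hn'
        rw [Matrix.det_of_lowerTriangular L htri]
        simp [hL]
      rw [hE, Matrix.det_mul, hLdet, one_mul]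
      -- expand det N by multilinearity
      classical
      set A : Fin (n + 1) → Finset ℕ :=
        fun r => if r = 0 then {0} else Finset.Ico (mm ((r : ℕ) - 1)) (mm (r : ℕ)) with hA
      set g : Fin (n + 1) → ℕ → (Fin (n + 1) → ℝ) :=
        fun r k => if r = 0 then (fun c => esym x (mm 0) (c : ℕ))
          else (fun c => x k * dRow x k (c : ℕ)) with hg
      have hrow : ∀ r : Fin (n + 1), N r = ∑ k ∈ A r, g r k := by
        intro r
        induction r using Fin.cases with
        | zero =>
            funext c
            simp [hA, hg, hN, hT]
        | succ i =>
            funext c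
            have hne : (i.succ : Fin (n + 1)) ≠ 0 := Fin.succ_ne_zero i
            have hval : ((i.succ : Fin (n + 1)) : ℕ) = (i : ℕ) + 1 := Fin.val_succ i
            simp only [hA, hg, hN, hT, hne, if_false, hval, Nat.add_sub_cancel,
              Finset.sum_apply]
            have hle : mm (i : ℕ) ≤ mm ((i : ℕ) + 1) := hmmmono (Nat.le_succ _)
            have : ((i : ℕ) + 1 = 0) = False := by simp
            rw [if_neg (by omega)]
            exact esym_sub x (c : ℕ) hle
      have hNdet : Matrix.det N
          = ∑ p ∈ Fintype.piFinset A, Matrix.det (fun r c => g r (p r) c) := by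
        have h1 : N = fun r => ∑ k ∈ A r, g r k := funext hrow
        rw [h1]
        exact Matrix.detRowAlternating.toMultilinearMap.map_sum_finset g A
      rw [hNdet]
      -- each term is positive
      apply Finset.sum_pos
      · intro p hp
        have hp' : ∀ r, p r ∈ A r := (Fintype.mem_piFinset).mp hp
        have hpmem : ∀ i : Fin n, p i.succ ∈ Finset.Ico (mm (i : ℕ)) (mm ((i : ℕ) + 1)) := by
          intro i
          have := hp' i.succ
          simp only [hA, Fin.succ_ne_zero, if_false, Fin.val_succ, Nat.add_sub_cancel] at this
          exact this
        set q : Fin n → ℕ := fun i => p i.succ with hq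
        have hqmono : StrictMono q := by
          intro i j hij
          have h1 := Finset.mem_Ico.mp (hpmem i)
          have h2 := Finset.mem_Ico.mp (hpmem j)
          have hij' : (i : ℕ) + 1 ≤ (j : ℕ) := hij
          have : mm ((i : ℕ) + 1) ≤ mm (j : ℕ) := hmmmono hij'
          have e1 : q i = p i.succ := rfl
          have e2 : q j = p j.succ := rfl
          omega
        -- factor out scalars
        set v : Fin (n + 1) → ℝ := fun r => if r = 0 then 1 else x (p r) with hv
        set B : Matrix (Fin (n + 1)) (Fin (n + 1)) ℝ :=
          fun r c => if r = 0 then esym x (mm 0) (c : ℕ) else dRow x (p r) (c : ℕ) with hB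
        have hfac : (fun r c => g r (p r) c) = Matrix.of (fun r c => v r * B r c) := by
          ext r c
          by_cases hr : r = 0 <;> simp [hg, hv, hB, hr]
        rw [hfac, Matrix.det_mul_column v B]
        have hvpos : 0 < ∏ r, v r := by
          apply Finset.prod_pos
          intro r _
          by_cases hr : r = 0 <;> simp [hv, hr] <;> exact hx _
        have hB0 : ∀ i : Fin (n + 1), B i 0 = if i = 0 then 1 else 0 := by
          intro i
          by_cases hi : i = 0 <;> simp [hB, hi, esym_zero, dRow]
        have hBdet : Matrix.det B
            = Matrix.det (fun r c : Fin n => esym x (q r) (c : ℕ)) := by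
          rw [Matrix.det_succ_column_zero]
          rw [Finset.sum_eq_single 0]
          · have h00 : B 0 0 = 1 := by simp [hB, esym_zero]
            rw [h00]
            have hsub : (B.submatrix (Fin.succAbove 0) Fin.succ)
                = fun r c : Fin n => esym x (q r) (c : ℕ) := by
              ext r c
              simp only [Matrix.submatrix_apply, Fin.succAbove_zero, hB,
                Fin.succ_ne_zero, if_false, Fin.val_succ]
              rfl
            rw [hsub]
            simp
          · intro i _ hi
            rw [hB0, if_neg hi]
            ring
          · intro h
            exact absurd (Finset.mem_univ 0) h
        rw [hBdet]
        exact mul_pos hvpos (ih q hqmono)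
      · apply Fintype.piFinset_nonempty.mpr
        intro r
        induction r using Fin.cases with
        | zero => simp [hA]
        | succ i =>
            simp only [hA, Fin.succ_ne_zero, if_false, Fin.val_succ, Nat.add_sub_cancel]
            rw [Finset.nonempty_Ico]
            exact hmmlt (i : ℕ) i.isLt

theorem stmt1 (n : ℕ) (hn : 1 ≤ n) (m' : Fin n → ℕ) (hmono : StrictMono m')
    (x : ℕ → ℝ) (hx : ∀ i, 0 < x i) :
    0 < Matrix.det (fun r c : Fin n => esym x (m' r) (c : ℕ)) := by
  exact key x hx n m' hmono
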